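/- arXiv:2601.02929 — 4 statements merged into one kernel-verified Lean document; each statement's English description precedes it below -/
import Mathlib

section
/- If three points A = (cos α, sin α), B = (cos β, sin β), C = (cos γ, sin γ) are chosen with α, β, γ independent and uniformly distributed on [0, 2π), then the probability that the center (0,0) of the circle lies in the convex hull of {A, B, C} equals 1/4. Equivalently, (2π)^(−3) · ∫_{[0,2π]³} 𝟙[(0,0) ∈ convexHull ℝ {(cos α, sin α), (cos β, sin β), (cos γ, sin γ)}] d(α,β,γ) = 1/4. -/
open Real
open scoped Classical

/-- The point `(cos θ, sin θ)` on the unit circle in `ℝ²`. -/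
noncomputable def circlePt (θ : ℝ) : EuclideanSpace ℝ (Fin 2) := !₂[Real.cos θ, Real.sin θ]

/-- The point `(x, y)` in `ℝ²`. -/
noncomputable def pt2 (x y : ℝ) : EuclideanSpace ℝ (Fin 2) := !₂[x, y]

/-- The cross product `(Q − P)₁·(Y − P)₂ − (Q − P)₂·(Y − P)₁` detecting on which side of the
directed line from `P` to `Q` the point `Y` lies. -/
noncomputable def cross2 (P Q Y : EuclideanSpace ℝ (Fin 2)) : ℝ :=
  (Q - P) 0 * (Y - P) 1 - (Q - P) 1 * (Y - P) 0

/-- `R(Y, →PQ)`: equals `1` if `Y` is to the right of or on the directed line from `P` to `Q`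
(`cross2 P Q Y ≤ 0`), and `-1` otherwise. -/
noncomputable def Rside (Y P Q : EuclideanSpace ℝ (Fin 2)) : ℝ :=
  if cross2 P Q Y ≤ 0 then 1 else -1

open MeasureTheory

/-! The identity `sin (γ - β) • A + sin (α - γ) • B + sin (β - α) • C = 0` gives a vanishing
combination of the three points; taking cross products shows that, as soon as one of these sines
is nonzero, every vanishing combination is proportional to it. Hence the centre lies in the
triangle iff the three sines have a common sign. In terms of `x = β - α` and `y = γ - β` the
condition depends on `(x, y)` only, and for `x ∈ (0, π)` it holds exactly for `y ∈ [π - x, π]`.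
By the symmetry `x ↦ -x` the inner integral is `min x (2π - x)`, whose integral over a period is
`π²`, so the probability is `2π · π² / (2π)³ = 1/4`. -/

def SameSign (a b c : ℝ) : Prop :=
  (0 ≤ a ∧ 0 ≤ b ∧ 0 ≤ c) ∨ (a ≤ 0 ∧ b ≤ 0 ∧ c ≤ 0)

lemma sameSign_neg_iff {a b c : ℝ} : SameSign (-a) (-b) (-c) ↔ SameSign a b c := by
  simp only [SameSign, neg_nonneg, neg_nonpos]
  exact or_comm

lemma zero_mem_convexHull_triple_iff {E : Type*} [AddCommGroup E] [Module ℝ E] {a b c : E} :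
    (0 : E) ∈ convexHull ℝ {a, b, c} ↔ ∃ w₁ w₂ w₃ : ℝ, 0 ≤ w₁ ∧ 0 ≤ w₂ ∧ 0 ≤ w₃ ∧
      0 < w₁ + w₂ + w₃ ∧ w₁ • a + w₂ • b + w₃ • c = 0 := by
  constructor
  · rw [convexHull_insert (Set.insert_nonempty b {c}), mem_convexJoin, convexHull_pair]
    rintro ⟨_, rfl, _, ⟨u, v, hu, hv, huv, rfl⟩, s, t, hs, ht, hst, h⟩
    refine ⟨s, t * u, t * v, hs, mul_nonneg ht hu, mul_nonneg ht hv, ?_, ?_⟩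
    · nlinarith
    · rw [← h]; module
  · rintro ⟨w₁, w₂, w₃, h₁, h₂, h₃, hpos, h⟩
    have hcm : Finset.univ.centerMass ![w₁, w₂, w₃] ![a, b, c] = 0 := by
      simp [Finset.centerMass, Fin.sum_univ_three, h]
    rw [← hcm]
    refine Finset.centerMass_mem_convexHull _ (fun i _ => ?_) (by simpa [Fin.sum_univ_three])
      (fun i _ => ?_) <;> fin_cases i <;> simp [*]

lemma sameSign_of_mul_eq_mul {w₁ w₂ w₃ s₁ s₂ s₃ : ℝ} (h₁ : 0 ≤ w₁) (h₂ : 0 ≤ w₂) (h₃ : 0 ≤ w₃)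
    (hpos : 0 < w₁ + w₂ + w₃) (h₁₂ : w₁ * s₂ = w₂ * s₁) (h₁₃ : w₁ * s₃ = w₃ * s₁)
    (h₂₃ : w₂ * s₃ = w₃ * s₂) : SameSign s₁ s₂ s₃ := by
  unfold SameSign
  rcases h₁.lt_or_eq with h₁ | rfl
  · rcases le_total 0 s₁ with hs | hs
    · left; refine ⟨hs, ?_, ?_⟩ <;> nlinarith
    · right; refine ⟨hs, ?_, ?_⟩ <;> nlinarith
  rcases h₂.lt_or_eq with h₂ | rfl
  · rcases le_total 0 s₂ with hs | hs
    · left; refine ⟨?_, hs, ?_⟩ <;> nlinarith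
    · right; refine ⟨?_, hs, ?_⟩ <;> nlinarith
  have h₃ : 0 < w₃ := by linarith
  rcases le_total 0 s₃ with hs | hs
  · left; refine ⟨?_, ?_, hs⟩ <;> nlinarith
  · right; refine ⟨?_, ?_, hs⟩ <;> nlinarith

lemma sin_sub_smul_circlePt_add_eq_zero (α β γ : ℝ) :
    sin (γ - β) • circlePt α + sin (α - γ) • circlePt β + sin (β - α) • circlePt γ = 0 := by
  ext i
  fin_cases i <;> simp [circlePt, sin_sub] <;> ring

lemma sameSign_of_smul_circlePt_add_eq_zero {α β γ w₁ w₂ w₃ : ℝ} (h₁ : 0 ≤ w₁) (h₂ : 0 ≤ w₂)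
    (h₃ : 0 ≤ w₃) (hpos : 0 < w₁ + w₂ + w₃)
    (h : w₁ • circlePt α + w₂ • circlePt β + w₃ • circlePt γ = 0) :
    SameSign (sin (γ - β)) (sin (α - γ)) (sin (β - α)) := by
  have hx : w₁ * cos α + w₂ * cos β + w₃ * cos γ = 0 := by
    simpa [circlePt] using congrArg (· 0) h
  have hy : w₁ * sin α + w₂ * sin β + w₃ * sin γ = 0 := by
    simpa [circlePt] using congrArg (· 1) h
  -- each relation is the cross product of `h` with one of the three points
  refine sameSign_of_mul_eq_mul h₁ h₂ h₃ hpos ?_ ?_ ?_ <;> simp only [sin_sub]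
  · linear_combination cos γ * hy - sin γ * hx
  · linear_combination sin β * hx - cos β * hy
  · linear_combination cos α * hy - sin α * hx

lemma zero_mem_convexHull_circlePt_iff {α β γ : ℝ} (h : sin (γ - β) ≠ 0) :
    (0 : EuclideanSpace ℝ (Fin 2)) ∈ convexHull ℝ {circlePt α, circlePt β, circlePt γ} ↔
      SameSign (sin (γ - β)) (sin (α - γ)) (sin (β - α)) := by
  rw [zero_mem_convexHull_triple_iff]
  constructor
  · rintro ⟨w₁, w₂, w₃, h₁, h₂, h₃, hpos, hw⟩
    exact sameSign_of_smul_circlePt_add_eq_zero h₁ h₂ h₃ hpos hw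
  · have key := sin_sub_smul_circlePt_add_eq_zero α β γ
    rintro (⟨h₁, h₂, h₃⟩ | ⟨h₁, h₂, h₃⟩)
    · exact ⟨_, _, _, h₁, h₂, h₃, by positivity, key⟩
    · refine ⟨_, _, _, neg_nonneg.2 h₁, neg_nonneg.2 h₂, neg_nonneg.2 h₃, ?_, ?_⟩
      · have := h.lt_of_le h₁; linarith
      · rw [← neg_eq_zero, ← key]; module

lemma intervalIntegral_congr_of_countable {f g : ℝ → ℝ} {a b : ℝ} {s : Set ℝ}
    (hs : s.Countable) (h : ∀ x ∈ Set.uIoc a b, x ∉ s → f x = g x) :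
    ∫ x in a..b, f x = ∫ x in a..b, g x :=
  intervalIntegral.integral_congr_ae <| by
    filter_upwards [hs.ae_notMem volume] with x hx hmem using h x hmem hx

lemma intervalIntegral_indicator_Icc_one {a b c d : ℝ} (hac : a < c) (hcd : c ≤ d) (hdb : d ≤ b) :
    ∫ y in a..b, (Set.Icc c d).indicator (fun _ => (1 : ℝ)) y = d - c := by
  rw [intervalIntegral.integral_of_le (by linarith), integral_indicator measurableSet_Icc,
    Measure.restrict_restrict measurableSet_Icc,
    Set.inter_eq_left.2 (Set.Icc_subset_Ioc_iff hcd |>.2 ⟨hac, hdb⟩)]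
  simp [hcd]

lemma integral_min_two_mul_sub {a : ℝ} (ha : 0 ≤ a) :
    ∫ x in 0..2 * a, min x (2 * a - x) = a ^ 2 := by
  have hcont : Continuous fun x : ℝ => min x (2 * a - x) := by fun_prop
  rw [← intervalIntegral.integral_add_adjacent_intervals (b := a)
    (hcont.intervalIntegrable _ _) (hcont.intervalIntegrable _ _)]
  have h₁ : ∫ x in 0..a, min x (2 * a - x) = ∫ x in 0..a, x :=
    intervalIntegral.integral_congr fun x hx => by
      rw [Set.uIcc_of_le ha] at hx
      exact min_eq_left (by linarith [hx.2])
  have h₂ : ∫ x in a..2 * a, min x (2 * a - x) = ∫ x in a..2 * a, (2 * a - x) :=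
    intervalIntegral.integral_congr fun x hx => by
      rw [Set.uIcc_of_le (by linarith)] at hx
      exact min_eq_right (by linarith [hx.1])
  rw [h₁, h₂, intervalIntegral.integral_sub intervalIntegrable_const
    (continuous_id'.intervalIntegrable _ _), integral_id, integral_id,
    intervalIntegral.integral_const, smul_eq_mul]
  ring

namespace Function.Periodic

variable {f : ℝ → ℝ} {T : ℝ}

lemma intervalIntegral_comp_sub_eq (hf : Periodic f T) (c : ℝ) :
    ∫ x in 0..T, f (x - c) = ∫ x in 0..T, f x := by
  rw [intervalIntegral.integral_comp_sub_right, zero_sub, ← neg_add_eq_sub,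
    hf.intervalIntegral_add_eq (-c) 0, zero_add]

lemma intervalIntegral_comp_neg_eq (hf : Periodic f T) :
    ∫ x in 0..T, f (-x) = ∫ x in 0..T, f x := by
  have := hf.intervalIntegral_add_eq (-T) 0
  rwa [neg_add_cancel, zero_add, ← neg_zero, ← intervalIntegral.integral_comp_neg, neg_zero] at this

end Function.Periodic

/-- With `x = β - α` and `y = γ - β`, this is the indicator of the sign condition of
`zero_mem_convexHull_circlePt_iff`, since `sin (α - γ) = -sin (x + y)`. -/
noncomputable def sameSignIndicator (x y : ℝ) : ℝ :=
  if SameSign (sin y) (-sin (x + y)) (sin x) then 1 else 0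

lemma sameSignIndicator_periodic_left (y : ℝ) :
    Function.Periodic (sameSignIndicator · y) (2 * π) := by
  intro x
  simp only [sameSignIndicator, add_right_comm x, sin_add_two_pi]

lemma sameSignIndicator_periodic_right (x : ℝ) :
    Function.Periodic (sameSignIndicator x) (2 * π) := by
  intro y
  simp only [sameSignIndicator, ← add_assoc, sin_add_two_pi]

lemma sameSignIndicator_neg_left (x y : ℝ) :
    sameSignIndicator (-x) y = sameSignIndicator x (-y) := by
  unfold sameSignIndicator
  rw [← sameSign_neg_iff]
  simp only [sin_neg, neg_neg, show -x + y = -(x + -y) by ring]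

lemma sameSignIndicator_eq_indicator {x y : ℝ} (hx₀ : 0 < x) (hxπ : x < π) (hy₀ : 0 < y)
    (hy : y < 2 * π) : sameSignIndicator x y = (Set.Icc (π - x) π).indicator (fun _ => 1) y := by
  have hsx : 0 < sin x := sin_pos_of_pos_of_lt_pi hx₀ hxπ
  unfold sameSignIndicator SameSign
  by_cases hyπ : y ≤ π
  · by_cases hxy : π - x ≤ y
    · have : sin (x + y) ≤ 0 := by
        rw [← sin_sub_two_pi]
        exact sin_nonpos_of_nonpos_of_neg_pi_le (by linarith) (by linarith)
      rw [if_pos (Or.inl ⟨sin_nonneg_of_nonneg_of_le_pi hy₀.le hyπ, by linarith, hsx.le⟩),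
        Set.indicator_of_mem (Set.mem_Icc.2 ⟨hxy, hyπ⟩)]
    · have : 0 < sin (x + y) := sin_pos_of_pos_of_lt_pi (by linarith) (by linarith)
      rw [if_neg (by rintro (⟨-, h, -⟩ | ⟨-, -, h⟩) <;> linarith),
        Set.indicator_of_notMem (fun h => hxy h.1)]
  · have : sin y < 0 := by
      rw [← sin_sub_two_pi]
      exact sin_neg_of_neg_of_neg_pi_lt (by linarith) (by linarith)
    rw [if_neg (by rintro (⟨h, -, -⟩ | ⟨-, -, h⟩) <;> linarith),
      Set.indicator_of_notMem (fun h => hyπ h.2)]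

lemma integral_sameSignIndicator_of_lt_pi {x : ℝ} (hx₀ : 0 < x) (hxπ : x < π) :
    ∫ y in 0..2 * π, sameSignIndicator x y = x := by
  rw [intervalIntegral_congr_of_countable (Set.countable_singleton (2 * π))
      (g := (Set.Icc (π - x) π).indicator fun _ => 1),
    intervalIntegral_indicator_Icc_one (by linarith) (by linarith) (by linarith [pi_pos])]
  · ring
  · intro y hy hy2π
    rw [Set.uIoc_of_le (by positivity)] at hy
    exact sameSignIndicator_eq_indicator hx₀ hxπ hy.1 (hy.2.lt_of_ne hy2π)

lemma integral_sameSignIndicator_neg (x : ℝ) :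
    ∫ y in 0..2 * π, sameSignIndicator (-x) y = ∫ y in 0..2 * π, sameSignIndicator x y := by
  simp only [sameSignIndicator_neg_left]
  exact (sameSignIndicator_periodic_right x).intervalIntegral_comp_neg_eq

lemma integral_sameSignIndicator_eq_min {x : ℝ} (hx₀ : 0 < x) (hx : x < 2 * π) (hxπ : x ≠ π) :
    ∫ y in 0..2 * π, sameSignIndicator x y = min x (2 * π - x) := by
  rcases hxπ.lt_or_gt with hxπ | hxπ
  · rw [integral_sameSignIndicator_of_lt_pi hx₀ hxπ, min_eq_left (by linarith)]
  · calc ∫ y in 0..2 * π, sameSignIndicator x y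
          = ∫ y in 0..2 * π, sameSignIndicator (-(2 * π - x)) y := by
            simp only [neg_sub, (sameSignIndicator_periodic_left _).sub_eq]
        _ = min x (2 * π - x) := by
            rw [integral_sameSignIndicator_neg,
              integral_sameSignIndicator_of_lt_pi (by linarith) (by linarith),
              min_eq_right (by linarith)]

lemma integral_integral_sameSignIndicator :
    ∫ x in 0..2 * π, ∫ y in 0..2 * π, sameSignIndicator x y = π ^ 2 := by
  rw [intervalIntegral_congr_of_countable ((Set.countable_singleton (2 * π)).insert π)
      (g := fun x => min x (2 * π - x)), integral_min_two_mul_sub pi_pos.le]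
  intro x hx hxs
  rw [Set.uIoc_of_le (by positivity)] at hx
  simp only [Set.mem_insert_iff, Set.mem_singleton_iff, not_or] at hxs
  exact integral_sameSignIndicator_eq_min hx.1 (hx.2.lt_of_ne hxs.2) hxs.1

lemma integral_sameSignIndicator_periodic :
    Function.Periodic (fun x => ∫ y in 0..2 * π, sameSignIndicator x y) (2 * π) := fun x =>
  intervalIntegral.integral_congr fun y _ => sameSignIndicator_periodic_left y x

lemma countable_setOf_sin_sub_eq_zero (β : ℝ) : {γ : ℝ | sin (γ - β) = 0}.Countable :=
  (Set.countable_range fun n : ℤ => β + n * π).mono fun γ hγ => by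
    obtain ⟨n, hn⟩ := sin_eq_zero_iff.1 hγ
    exact ⟨n, by linarith⟩

lemma integral_indicator_zero_mem_convexHull_circlePt (α β : ℝ) :
    (∫ γ in 0..2 * π,
      if (0 : EuclideanSpace ℝ (Fin 2)) ∈ convexHull ℝ {circlePt α, circlePt β, circlePt γ}
        then (1 : ℝ) else 0) = ∫ y in 0..2 * π, sameSignIndicator (β - α) y := by
  rw [← (sameSignIndicator_periodic_right (β - α)).intervalIntegral_comp_sub_eq β]
  refine intervalIntegral_congr_of_countable (countable_setOf_sin_sub_eq_zero β) fun γ _ hγ => ?_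
  rw [zero_mem_convexHull_circlePt_iff hγ, sameSignIndicator,
    show β - α + (γ - β) = -(α - γ) by ring, sin_neg, neg_neg]

theorem inscribed_triangle_contains_center :
    (2*π)⁻¹^3 * (∫ α in (0:ℝ)..(2*π), ∫ β in (0:ℝ)..(2*π), ∫ γ in (0:ℝ)..(2*π),
      if (0 : EuclideanSpace ℝ (Fin 2)) ∈ convexHull ℝ {circlePt α, circlePt β, circlePt γ}
        then (1:ℝ) else 0)
    = 1/4 := by
  have hinner (α : ℝ) : (∫ β in (0:ℝ)..(2*π), ∫ γ in (0:ℝ)..(2*π),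
      if (0 : EuclideanSpace ℝ (Fin 2)) ∈ convexHull ℝ {circlePt α, circlePt β, circlePt γ}
        then (1:ℝ) else 0) = π ^ 2 := by
    simp only [integral_indicator_zero_mem_convexHull_circlePt α]
    rw [integral_sameSignIndicator_periodic.intervalIntegral_comp_sub_eq α,
      integral_integral_sameSignIndicator]
  simp only [hinner, intervalIntegral.integral_const, smul_eq_mul, sub_zero]
  field_simp
  ring
end

section
/- Let A, B, C be three points on the unit circle in ℝ² that are not all equal and form a nondegenerate triangle. The center (0,0) lies in the convex hull of {A, B, C} if and only if all three angles of the triangle ABC are at most π/2 (the triangle is non-obtuse). -/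
/-!
If `a • A + b • B + c • C = 0` with `a + b + c = 1` and `‖A‖ = ‖B‖ = ‖C‖`, pairing this relation
with `B + C` gives `2 * a * ⟪B - A, C - A⟫ = ‖B + C‖ ^ 2`. Hence the barycentric coordinate of the
circumcenter at a vertex has the sign of the cosine of the angle there, unless the opposite side
is a diameter; then that angle is right (Thales) and the circumcenter is the midpoint of the side.
In the plane, the barycentric coordinates of the center exist since the triangle is nondegenerate.
-/

open Real
open scoped InnerProductSpace

namespace InnerProductGeometry

variable {V : Type*} [NormedAddCommGroup V] [InnerProductSpace ℝ V]

theorem angle_le_pi_div_two_iff_inner_nonneg (x y : V) :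
    angle x y ≤ π / 2 ↔ 0 ≤ ⟪x, y⟫_ℝ := by
  rcases eq_or_ne x 0 with rfl | hx
  · simp
  rcases eq_or_ne y 0 with rfl | hy
  · simp
  rw [angle, arccos_le_pi_div_two, le_div_iff₀ (mul_pos (norm_pos_iff.2 hx) (norm_pos_iff.2 hy)),
    zero_mul]

end InnerProductGeometry

section ConvexHull

variable {𝕜 E : Type*} [Field 𝕜] [LinearOrder 𝕜] [IsStrictOrderedRing 𝕜] [AddCommGroup E]
  [Module 𝕜 E]

theorem mem_convexHull_triple_iff {x a b c : E} :
    x ∈ convexHull 𝕜 {a, b, c} ↔ ∃ α β γ : 𝕜, 0 ≤ α ∧ 0 ≤ β ∧ 0 ≤ γ ∧ α + β + γ = 1 ∧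
      α • a + β • b + γ • c = x := by
  constructor
  · rw [← convexJoin_singleton_segment, mem_convexJoin]
    rintro ⟨_, rfl, p, ⟨β, γ, hβ, hγ, hβγ, rfl⟩, s, t, hs, ht, hst, rfl⟩
    refine ⟨s, t * β, t * γ, hs, by positivity, by positivity, ?_, ?_⟩
    · linear_combination t * hβγ + hst
    · simp only [smul_add, mul_smul, add_assoc]
  · rintro ⟨α, β, γ, hα, hβ, hγ, hsum, rfl⟩
    refine mem_convexHull_of_exists_fintype ![α, β, γ] ![a, b, c] ?_ ?_ ?_ ?_
    · intro i; fin_cases i <;> assumption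
    · simpa [Fin.sum_univ_three] using hsum
    · intro i; fin_cases i <;> simp
    · simp [Fin.sum_univ_three]

end ConvexHull

theorem AffineIndependent.exists_smul_add_smul_add_smul_eq {k V : Type*} [Field k]
    [AddCommGroup V] [Module k V] [FiniteDimensional k V] (hk : Module.finrank k V = 2)
    {a b c : V} (hind : AffineIndependent k ![a, b, c]) (x : V) :
    ∃ α β γ : k, α + β + γ = 1 ∧ α • a + β • b + γ • c = x := by
  have hspan : affineSpan k (Set.range ![a, b, c]) = ⊤ := by
    rw [hind.affineSpan_eq_top_iff_card_eq_finrank_add_one, hk]; rfl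
  obtain ⟨w, hw, hx⟩ := eq_affineCombination_of_mem_affineSpan_of_fintype
    (hspan ▸ AffineSubspace.mem_top k V x)
  refine ⟨w 0, w 1, w 2, by simpa [Fin.sum_univ_three] using hw, ?_⟩
  rw [hx, Finset.affineCombination_eq_linear_combination _ _ _ hw]
  simp [Fin.sum_univ_three]

section Circumcenter

variable {V : Type*} [NormedAddCommGroup V] [InnerProductSpace ℝ V] {A B C : V} {a b c r : ℝ}

theorem two_mul_mul_inner_sub_sub_eq_norm_add_sq (hA : ‖A‖ = r) (hB : ‖B‖ = r) (hC : ‖C‖ = r)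
    (habc : a + b + c = 1) (h0 : a • A + b • B + c • C = 0) :
    2 * a * ⟪B - A, C - A⟫_ℝ = ‖B + C‖ ^ 2 := by
  have h := congrArg (fun v => ⟪v, B + C⟫_ℝ) h0
  simp only [inner_add_left, inner_add_right, real_inner_smul_left, inner_zero_left,
    real_inner_self_eq_norm_sq] at h
  rw [real_inner_comm B C, hB, hC] at h
  rw [inner_sub_left, inner_sub_right, inner_sub_right, real_inner_self_eq_norm_sq,
    real_inner_comm A B, norm_add_sq_real, hA, hB, hC]
  linear_combination -2 * h + 2 * (r ^ 2 + ⟪B, C⟫_ℝ) * habc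

theorem inner_sub_sub_nonneg_of_nonneg (hA : ‖A‖ = r) (hB : ‖B‖ = r) (hC : ‖C‖ = r)
    (habc : a + b + c = 1) (h0 : a • A + b • B + c • C = 0) (ha : 0 ≤ a) :
    0 ≤ ⟪B - A, C - A⟫_ℝ := by
  have key := two_mul_mul_inner_sub_sub_eq_norm_add_sq hA hB hC habc h0
  rcases ha.eq_or_lt with rfl | ha
  · have hCB : C = -B := eq_neg_of_add_eq_zero_right (by simpa using key.symm)
    rw [hCB, ← neg_add', inner_neg_right, real_inner_comm,
      (real_inner_add_sub_eq_zero_iff B A).2 (hB.trans hA.symm), neg_zero]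
  · exact nonneg_of_mul_nonneg_right (key ▸ sq_nonneg _) (by positivity)

theorem pos_of_inner_sub_sub_nonneg (hA : ‖A‖ = r) (hB : ‖B‖ = r) (hC : ‖C‖ = r)
    (habc : a + b + c = 1) (h0 : a • A + b • B + c • C = 0) (hBC : B + C ≠ 0)
    (hs : 0 ≤ ⟪B - A, C - A⟫_ℝ) : 0 < a := by
  have key := two_mul_mul_inner_sub_sub_eq_norm_add_sq hA hB hC habc h0
  have : 0 < 2 * a * ⟪B - A, C - A⟫_ℝ := key ▸ by positivity
  nlinarith

theorem zero_mem_convexHull_iff_inner_nonneg (hA : ‖A‖ = r) (hB : ‖B‖ = r) (hC : ‖C‖ = r)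
    (habc : a + b + c = 1) (h0 : a • A + b • B + c • C = 0) :
    (0 : V) ∈ convexHull ℝ {A, B, C} ↔
      0 ≤ ⟪B - A, C - A⟫_ℝ ∧ 0 ≤ ⟪A - B, C - B⟫_ℝ ∧ 0 ≤ ⟪A - C, B - C⟫_ℝ := by
  constructor
  · rw [mem_convexHull_triple_iff]
    rintro ⟨α, β, γ, hα, hβ, hγ, hsum, hzero⟩
    exact ⟨inner_sub_sub_nonneg_of_nonneg hA hB hC hsum hzero hα,
      inner_sub_sub_nonneg_of_nonneg hB hA hC (by linarith : β + α + γ = 1)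
        (by rw [← hzero]; abel) hβ,
      inner_sub_sub_nonneg_of_nonneg hC hA hB (by linarith : γ + α + β = 1)
        (by rw [← hzero]; abel) hγ⟩
  rintro ⟨hsA, hsB, hsC⟩
  rw [mem_convexHull_triple_iff]
  by_cases hBC : B + C = 0
  · exact ⟨0, 1 / 2, 1 / 2, le_rfl, by norm_num, by norm_num, by norm_num,
      by rw [zero_smul, zero_add, ← smul_add, hBC, smul_zero]⟩
  by_cases hAC : A + C = 0
  · exact ⟨1 / 2, 0, 1 / 2, by norm_num, le_rfl, by norm_num, by norm_num,
      by rw [zero_smul, add_zero, ← smul_add, hAC, smul_zero]⟩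
  by_cases hAB : A + B = 0
  · exact ⟨1 / 2, 1 / 2, 0, by norm_num, by norm_num, le_rfl, by norm_num,
      by rw [zero_smul, add_zero, ← smul_add, hAB, smul_zero]⟩
  exact ⟨a, b, c, (pos_of_inner_sub_sub_nonneg hA hB hC habc h0 hBC hsA).le,
    (pos_of_inner_sub_sub_nonneg hB hA hC (by linarith : b + a + c = 1) (by rw [← h0]; abel)
      hAC hsB).le,
    (pos_of_inner_sub_sub_nonneg hC hA hB (by linarith : c + a + b = 1) (by rw [← h0]; abel)
      hAB hsC).le,
    habc, h0⟩

end Circumcenter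

theorem center_mem_convexHull_iff_nonobtuse (A B C : EuclideanSpace ℝ (Fin 2))
    (hA : ‖A‖ = 1) (hB : ‖B‖ = 1) (hC : ‖C‖ = 1)
    (hnd : AffineIndependent ℝ ![A, B, C]) :
    (0 : EuclideanSpace ℝ (Fin 2)) ∈ convexHull ℝ {A, B, C} ↔
      InnerProductGeometry.angle (B - A) (C - A) ≤ π/2 ∧
      InnerProductGeometry.angle (A - B) (C - B) ≤ π/2 ∧
      InnerProductGeometry.angle (A - C) (B - C) ≤ π/2 := by
  obtain ⟨a, b, c, habc, h0⟩ := hnd.exists_smul_add_smul_add_smul_eq finrank_euclideanSpace_fin 0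
  simp only [InnerProductGeometry.angle_le_pi_div_two_iff_inner_nonneg]
  exact zero_mem_convexHull_iff_inner_nonneg hA hB hC habc h0
end

section
/- For every r ∈ (0, 1), ∫₀^{2π} (sin θ / (1 + r² − 2r cos θ)) · Complex.arg(1 − r·exp(iθ)) dθ = π · log(1 − r²) / r. -/
/-!
Write `w θ = log (1 - r e^{iθ})`. Then `arg (1 - r e^{iθ}) = Im (w θ)` and
`sin θ / (1 + r² - 2 r cos θ) = Re (w' θ) / r`. Since `2 Re (w') w = w' w + conj (w') w` and
`w' w = (w² / 2)'` integrates to zero over a period, the integral is `Im ∫ conj (w') w / (2 r)`.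
On the unit circle `conj (w' θ) = i r / (e^{iθ} - r)`, and Cauchy's integral formula for
`z ↦ log (1 - r z)` at `r` and at `0` gives `∫₀^{2π} w θ / (e^{iθ} - r) dθ = 2π log (1 - r²) / r`.
-/

open scoped Real
open Complex MeasureTheory ComplexConjugate

open Metric in
theorem DifferentiableOn.integral_circleMap_div_sub {f : ℂ → ℂ} {R : ℝ} {a : ℂ}
    (hf : DifferentiableOn ℂ f (closedBall 0 R)) (ha : a ∈ ball (0 : ℂ) R) (ha0 : a ≠ 0) :
    ∫ θ in (0 : ℝ)..2 * π, f (circleMap 0 R θ) / (circleMap 0 R θ - a) =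
      2 * π * (f a - f 0) / a := by
  have hR : 0 < R := pos_of_mem_ball ha
  have hint : ∀ b ∈ ball (0 : ℂ) R, CircleIntegrable (fun z ↦ (z - b)⁻¹ • f z) 0 R :=
    fun b hb ↦ ContinuousOn.circleIntegrable hR.le <|
      ((continuousOn_id.sub continuousOn_const).inv₀ fun _ hz ↦
        sub_ne_zero.2 (sphere_disjoint_ball.ne_of_mem hz hb)).smul
      (hf.continuousOn.mono sphere_subset_closedBall)
  calc ∫ θ in (0 : ℝ)..2 * π, f (circleMap 0 R θ) / (circleMap 0 R θ - a)
      = (a * I)⁻¹ * ∮ z in C(0, R), ((z - a)⁻¹ • f z - (z - 0)⁻¹ • f z) := by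
        rw [circleIntegral, ← intervalIntegral.integral_const_mul]
        refine intervalIntegral.integral_congr fun θ _ ↦ ?_
        have hz : circleMap 0 R θ ≠ 0 := circleMap_ne_center hR.ne'
        have hza : circleMap 0 R θ - a ≠ 0 := sub_ne_zero.2 <|
          sphere_disjoint_ball.ne_of_mem (circleMap_mem_sphere 0 hR.le θ) ha
        -- on the circle `dz = z I dθ`, and `1 / (z (z - a)) = (1 / (z - a) - 1 / z) / a`
        simp only [deriv_circleMap, smul_eq_mul, sub_zero]
        field_simp
        ring
    _ = (a * I)⁻¹ * ((2 * π * I) • f a - (2 * π * I) • f 0) := by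
        rw [circleIntegral.integral_sub (hint a ha) (hint 0 (mem_ball_self hR)),
          hf.circleIntegral_sub_inv_smul ha, hf.circleIntegral_sub_inv_smul (mem_ball_self hR)]
    _ = 2 * π * (f a - f 0) / a := by
        simp only [smul_eq_mul]
        field_simp

theorem intervalIntegral.integral_deriv_mul_self_eq_zero {A : Type*} [NormedCommRing A]
    [NormedAlgebra ℝ A] [CompleteSpace A] {g g' : ℝ → A} {a b : ℝ}
    (hg : ∀ x ∈ Set.uIcc a b, HasDerivAt g (g' x) x) (hg' : IntervalIntegrable g' volume a b)
    (hab : g a = g b) : ∫ x in a..b, g' x * g x = 0 := by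
  have h := integral_deriv_mul_eq_sub hg hg hg' hg'
  simp_rw [mul_comm (g _) (g' _), ← two_smul ℝ (g' _ * g _), intervalIntegral.integral_smul, hab,
    sub_self] at h
  exact (smul_eq_zero.1 h).resolve_left two_ne_zero

theorem intervalIntegral.integral_re_deriv_mul_im {g g' : ℝ → ℂ} {a b : ℝ}
    (hg : ∀ x ∈ Set.uIcc a b, HasDerivAt g (g' x) x) (hg' : ContinuousOn g' (Set.uIcc a b))
    (hab : g a = g b) :
    ∫ x in a..b, (g' x).re * (g x).im = (∫ x in a..b, conj (g' x) * g x).im / 2 := by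
  have hg_cont : ContinuousOn g (Set.uIcc a b) :=
    fun x hx ↦ (hg x hx).continuousAt.continuousWithinAt
  have hint : IntervalIntegrable (fun x ↦ g' x * g x) volume a b :=
    (hg'.mul hg_cont).intervalIntegrable
  have hint_conj : IntervalIntegrable (fun x ↦ conj (g' x) * g x) volume a b :=
    ((continuous_conj.comp_continuousOn hg').mul hg_cont).intervalIntegrable
  calc ∫ x in a..b, (g' x).re * (g x).im
      = (∫ x in a..b, g' x * g x + conj (g' x) * g x).im / 2 := by
        have h_im := imCLM.intervalIntegral_comp_comm (hint.add hint_conj)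
        simp only [imCLM_apply] at h_im
        rw [← h_im, ← intervalIntegral.integral_div]
        refine intervalIntegral.integral_congr fun x _ ↦ ?_
        simp only [← add_mul, add_conj, im_ofReal_mul]
        ring
    _ = (∫ x in a..b, conj (g' x) * g x).im / 2 := by
        rw [intervalIntegral.integral_add hint hint_conj,
          integral_deriv_mul_self_eq_zero hg hg'.intervalIntegrable hab, zero_add]

section OneSubMulExp

variable {r : ℝ}

theorem one_sub_mul_mem_slitPlane (hr : |r| < 1) {z : ℂ} (hz : ‖z‖ ≤ 1) :
    1 - r * z ∈ slitPlane := by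
  rw [sub_eq_add_neg]
  refine mem_slitPlane_of_norm_lt_one ?_
  rw [norm_neg, norm_mul, norm_real, Real.norm_eq_abs]
  nlinarith [abs_nonneg r, norm_nonneg z]

theorem normSq_one_sub_mul_exp (r θ : ℝ) :
    normSq (1 - r * exp (θ * I)) = 1 + r ^ 2 - 2 * r * Real.cos θ := by
  simp only [normSq_apply, sub_re, sub_im, one_re, one_im, re_ofReal_mul, im_ofReal_mul,
    exp_ofReal_mul_I_re, exp_ofReal_mul_I_im]
  nlinarith [Real.sin_sq_add_cos_sq θ]

theorem hasDerivAt_log_one_sub_mul_exp (hr : |r| < 1) (θ : ℝ) :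
    HasDerivAt (fun t : ℝ ↦ log (1 - r * exp (t * I)))
      (-(r * I * exp (θ * I)) / (1 - r * exp (θ * I))) θ := by
  have hexp : HasDerivAt (fun t : ℝ ↦ exp (t * I)) (exp (θ * I) * I) θ := by
    simpa using ((hasDerivAt_id (θ : ℂ)).mul_const I).cexp.comp_ofReal
  convert ((hexp.const_mul (r : ℂ)).const_sub 1).clog_real
    (one_sub_mul_mem_slitPlane hr (norm_exp_ofReal_mul_I θ).le) using 1
  ring

theorem re_neg_mul_I_mul_exp_div (r θ : ℝ) :
    (-(r * I * exp (θ * I)) / (1 - r * exp (θ * I))).re =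
      r * Real.sin θ / (1 + r ^ 2 - 2 * r * Real.cos θ) := by
  rw [div_re, normSq_one_sub_mul_exp, ← add_div]
  congr 1
  simp only [neg_re, neg_im, sub_re, sub_im, one_re, one_im, mul_re, mul_im, ofReal_re, ofReal_im,
    I_re, I_im, exp_ofReal_mul_I_re, exp_ofReal_mul_I_im]
  ring

theorem conj_neg_mul_I_mul_exp_div (r θ : ℝ) :
    conj (-(r * I * exp (θ * I)) / (1 - r * exp (θ * I))) = r * I / (exp (θ * I) - r) := by
  have hconj : conj (exp (θ * I)) = (exp (θ * I))⁻¹ := by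
    rw [← exp_conj, map_mul, conj_ofReal, conj_I, mul_neg, exp_neg]
  have hne : exp (θ * I) ≠ 0 := exp_ne_zero _
  simp only [map_div₀, map_neg, map_sub, map_mul, map_one, conj_ofReal, conj_I, hconj]
  field_simp

theorem integral_log_one_sub_mul_exp_div (hr0 : r ≠ 0) (hr : |r| < 1) :
    ∫ θ in (0 : ℝ)..2 * π, log (1 - r * exp (θ * I)) / (exp (θ * I) - r) =
      2 * π * Real.log (1 - r ^ 2) / r := by
  have hf : DifferentiableOn ℂ (fun z ↦ log (1 - r * z)) (Metric.closedBall 0 1) :=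
    fun z hz ↦ (((differentiableAt_id.const_mul _).const_sub 1).clog
      (one_sub_mul_mem_slitPlane hr (mem_closedBall_zero_iff.1 hz))).differentiableWithinAt
  have hr_mem : (r : ℂ) ∈ Metric.ball 0 1 := by simpa using hr
  have h := hf.integral_circleMap_div_sub hr_mem (ofReal_ne_zero.2 hr0)
  simp only [circleMap_zero, ofReal_one, one_mul, mul_zero, sub_zero, log_one] at h
  rw [h, ofReal_log (by nlinarith [sq_abs r, abs_nonneg r]), ofReal_sub, ofReal_one, ofReal_pow,
    sq]

end OneSubMulExp

theorem integral_sin_mul_arg (r : ℝ) (hr : r ∈ Set.Ioo (0:ℝ) 1) :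
    (∫ θ in (0:ℝ)..(2*π), (Real.sin θ / (1 + r^2 - 2*r*Real.cos θ)) *
        Complex.arg (1 - (r:ℂ) * Complex.exp (θ * Complex.I)))
      = π * Real.log (1 - r^2) / r := by
  obtain ⟨hr0, hr1⟩ := hr
  have hr : |r| < 1 := abs_lt.2 ⟨by linarith, hr1⟩
  set w : ℝ → ℂ := fun θ ↦ log (1 - r * exp (θ * I))
  set w' : ℝ → ℂ := fun θ ↦ -(r * I * exp (θ * I)) / (1 - r * exp (θ * I))
  have hw'_cont : Continuous w' := .div (by fun_prop) (by fun_prop) fun θ ↦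
    slitPlane_ne_zero (one_sub_mul_mem_slitPlane hr (norm_exp_ofReal_mul_I θ).le)
  have hw_periodic : w 0 = w (2 * π) := by
    simp only [w, ofReal_mul, ofReal_ofNat, exp_two_pi_mul_I, ofReal_zero, zero_mul, exp_zero]
  have hr0' : (r : ℂ) ≠ 0 := ofReal_ne_zero.2 hr0.ne'
  calc _ = (∫ θ in (0 : ℝ)..2 * π, (w' θ).re * (w θ).im) / r := by
        rw [← intervalIntegral.integral_div]
        refine intervalIntegral.integral_congr fun θ _ ↦ ?_
        simp only [w, w', re_neg_mul_I_mul_exp_div, log_im]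
        field_simp
    _ = (∫ θ in (0 : ℝ)..2 * π, conj (w' θ) * w θ).im / (2 * r) := by
        rw [intervalIntegral.integral_re_deriv_mul_im (fun θ _ ↦ hasDerivAt_log_one_sub_mul_exp hr θ)
          hw'_cont.continuousOn hw_periodic, div_div, mul_comm 2 r]
    _ = (∫ θ in (0 : ℝ)..2 * π, r * I * (w θ / (exp (θ * I) - r))).im / (2 * r) := by
        congr 3 with θ
        rw [conj_neg_mul_I_mul_exp_div]
        ring
    _ = (((2 * π * Real.log (1 - r ^ 2) : ℝ) : ℂ) * I).im / (2 * r) := by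
        rw [intervalIntegral.integral_const_mul, integral_log_one_sub_mul_exp_div hr0.ne' hr]
        push_cast
        field_simp
    _ = π * Real.log (1 - r ^ 2) / r := by
        rw [mul_I_im, ofReal_re]
        field_simp
end

section
/- For every r ∈ [0, 1), ∫₀^{2π} (Complex.arg(1 − r·exp(iθ)))² dθ = π · ∑_{n=1}^∞ r^(2n)/n² (that is, the integral equals π · Li₂(r²)). -/
/-!
For `|r| < 1`, taking imaginary parts in `-log (1 - z) = ∑ zⁿ / n` at `z = r e^{iθ}` gives the
sine series `arg (1 - r e^{iθ}) = -∑ rⁿ sin (nθ) / n`, dominated by the summable `|r|ⁿ / n`.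
Squaring it gives a double series dominated by `|r|ⁿ⁺ᵐ`, so it may be integrated term by term;
the sines are orthogonal on `[0, 2π]` with `∫ sin² (nθ) = π`, so only the diagonal
`π ∑ r²ⁿ / n²` survives (Parseval).
-/

open Real MeasureTheory

theorem MeasureTheory.hasSum_integral_sq_of_pairwise_orthogonal {α ι : Type*} [MeasurableSpace α]
    {μ : Measure α} [IsFiniteMeasure μ] [Countable ι] {f : ι → α → ℝ} {F : α → ℝ} {c : ι → ℝ}
    (hf : ∀ n, AEStronglyMeasurable (f n) μ) (hc : Summable c) (hfc : ∀ n x, ‖f n x‖ ≤ c n)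
    (hF : ∀ x, HasSum (f · x) (F x))
    (horth : Pairwise fun n m => ∫ x, f n x * f m x ∂μ = 0) :
    HasSum (fun n => ∫ x, f n x ^ 2 ∂μ) (∫ x, F x ^ 2 ∂μ) := by
  have hc0 : ∀ n x, 0 ≤ c n := fun n x => (norm_nonneg _).trans (hfc n x)
  have hprod : ∀ x, HasSum (fun p : ι × ι => f p.1 x * f p.2 x) (F x ^ 2) := fun x => by
    have hsum : Summable fun n => ‖f n x‖ := hc.of_nonneg_of_le (fun _ => norm_nonneg _) (hfc · x)
    simpa only [sq] using (hF x).mul (hF x) (summable_mul_of_summable_norm hsum hsum)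
  have hdouble : HasSum (fun p : ι × ι => ∫ x, f p.1 x * f p.2 x ∂μ) (∫ x, F x ^ 2 ∂μ) :=
    hasSum_integral_of_dominated_convergence (fun p _ => c p.1 * c p.2)
      (fun p => (hf p.1).mul (hf p.2))
      (fun p => ae_of_all _ fun x => by
        rw [norm_mul]
        exact mul_le_mul (hfc _ x) (hfc _ x) (norm_nonneg _) (hc0 _ x))
      (ae_of_all _ fun x => hc.mul_of_nonneg hc (hc0 · x) (hc0 · x))
      (integrable_const _) (ae_of_all _ hprod)
  have hdiag : Function.Injective fun n : ι => (n, n) := fun _ _ h => (Prod.ext_iff.mp h).1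
  rw [← hdiag.hasSum_iff] at hdouble
  · simpa only [Function.comp_def, sq] using hdouble
  · rintro ⟨n, m⟩ hnm
    exact horth fun (h : n = m) => hnm ⟨n, by rw [h]⟩

theorem integral_cos_int_mul_of_ne_zero {m : ℤ} (hm : m ≠ 0) :
    ∫ x in (0 : ℝ)..2 * π, cos (m * x) = 0 := by
  rw [intervalIntegral.integral_comp_mul_left cos (Int.cast_ne_zero.mpr hm), integral_cos,
    show (m : ℝ) * (2 * π) = (2 * m : ℤ) * π by push_cast; ring, sin_int_mul_pi]
  simp

theorem integral_sin_nat_mul_mul_sin_nat_mul {k l : ℕ} (hkl : k ≠ l) :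
    ∫ x in (0 : ℝ)..2 * π, sin (k * x) * sin (l * x) = 0 := by
  have hcos : ∀ m : ℤ, IntervalIntegrable (fun x => cos (m * x)) volume 0 (2 * π) :=
    fun m => (by fun_prop : Continuous fun x : ℝ => cos (m * x)).intervalIntegrable _ _
  have hprod : ∀ x : ℝ, sin (k * x) * sin (l * x)
      = (cos (((k - l : ℤ) : ℝ) * x) - cos (((k + l : ℤ) : ℝ) * x)) / 2 := fun x => by
    push_cast
    rw [sub_mul, add_mul, cos_sub, cos_add]
    ring
  simp_rw [hprod]
  rw [intervalIntegral.integral_div, intervalIntegral.integral_sub (hcos _) (hcos _),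
    integral_cos_int_mul_of_ne_zero (by omega), integral_cos_int_mul_of_ne_zero (by omega)]
  simp

theorem integral_sin_nat_mul_sq {k : ℕ} (hk : k ≠ 0) :
    ∫ x in (0 : ℝ)..2 * π, sin (k * x) ^ 2 = π := by
  have hsq : ∀ x : ℝ, sin (k * x) ^ 2 = (1 - cos (((2 * k : ℤ) : ℝ) * x)) / 2 := fun x => by
    rw [sin_sq_eq_half_sub]
    push_cast
    ring_nf
  simp_rw [hsq]
  rw [intervalIntegral.integral_div, intervalIntegral.integral_sub intervalIntegrable_const
    ((by fun_prop : Continuous fun x : ℝ => cos ((2 * k : ℤ) * x)).intervalIntegrable _ _),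
    integral_cos_int_mul_of_ne_zero (by omega)]
  simp

theorem Complex.hasSum_arg_one_sub {z : ℂ} (hz : ‖z‖ < 1) :
    HasSum (fun n : ℕ => -(z ^ (n + 1) / (n + 1)).im) (arg (1 - z)) := by
  have hlog : HasSum (fun n : ℕ => z ^ (n + 1) / (n + 1)) (-log (1 - z)) := by
    simpa using (hasSum_nat_add_iff' 1).mpr (hasSum_taylorSeries_neg_log hz)
  simpa [log_im] using (imCLM.hasSum hlog).neg

theorem Complex.hasSum_arg_one_sub_ofReal_mul_exp {r : ℝ} (hr : |r| < 1) (θ : ℝ) :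
    HasSum (fun n : ℕ => -(r ^ (n + 1) / (n + 1)) * Real.sin ((n + 1 : ℕ) * θ))
      (arg (1 - r * exp (θ * I))) := by
  have hz : ‖(r : ℂ) * exp (θ * I)‖ < 1 := by
    rwa [norm_mul, norm_exp_ofReal_mul_I, mul_one, norm_real, Real.norm_eq_abs]
  convert hasSum_arg_one_sub hz using 2 with n
  rw [mul_pow, ← exp_nat_mul, ← ofReal_pow,
    show ((n + 1 : ℕ) : ℂ) * (θ * I) = (((n + 1 : ℕ) * θ : ℝ) : ℂ) * I by push_cast; ring,
    show ((n : ℂ) + 1) = ((n + 1 : ℝ) : ℂ) by push_cast; rfl, div_ofReal_im, im_ofReal_mul,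
    exp_ofReal_mul_I_im]
  ring

theorem integral_arg_sq_eq_pi_mul_dilog (r : ℝ) (hr : r ∈ Set.Ico (0:ℝ) 1) :
    (∫ θ in (0:ℝ)..(2*π), (Complex.arg (1 - (r:ℂ) * Complex.exp (θ * Complex.I)))^2)
      = π * ∑' n : ℕ, r ^ (2*(n+1)) / ((n:ℝ)+1)^2 := by
  have habs : |r| < 1 := abs_lt.mpr ⟨by linarith [hr.1], hr.2⟩
  set a : ℕ → ℝ := fun n => -(r ^ (n + 1) / (n + 1)) with ha
  have hpi : 0 ≤ 2 * π := by positivity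
  have hsum := hasSum_integral_sq_of_pairwise_orthogonal
    (μ := volume.restrict (Set.Ioc 0 (2 * π))) (f := fun n θ => a n * sin ((n + 1 : ℕ) * θ))
    (fun n => by fun_prop) (hasSum_pow_div_log_of_abs_lt_one habs).summable.neg.abs
    (fun n θ => (norm_mul _ _).trans_le (mul_le_of_le_one_right (abs_nonneg _) (abs_sin_le_one _)))
    (Complex.hasSum_arg_one_sub_ofReal_mul_exp habs)
    (fun n m hnm => by
      simp_rw [← intervalIntegral.integral_of_le hpi, mul_mul_mul_comm,
        intervalIntegral.integral_const_mul,
        integral_sin_nat_mul_mul_sin_nat_mul (by omega : n + 1 ≠ m + 1), mul_zero])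
  rw [intervalIntegral.integral_of_le hpi, ← hsum.tsum_eq, ← tsum_mul_left]
  refine tsum_congr fun n => ?_
  simp_rw [← intervalIntegral.integral_of_le hpi, mul_pow, intervalIntegral.integral_const_mul,
    integral_sin_nat_mul_sq n.succ_ne_zero, ha, neg_sq, div_pow, ← pow_mul]
  ring
end
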